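/- arXiv:math/0102018 — 2 statements merged into one kernel-verified Lean document; each statement's English description precedes it below -/
import Mathlib

section
/- Let : D̂(A) → H be the unique continuous extension of A through the canonical embedding 𝓘 (so Â∘𝓘 = A). Then for every z ∈ ρ(A) one has −Â∘K(z) = z G(z), i.e. Â(K(z)ℓ) = −z G(z)ℓ for every ℓ ∈ X'. -/
/-!
Since `K(z)ℓ = z • R̂ (G(z)ℓ)`, it suffices that `Â R̂ = -1`. Now
`Â (𝓘 (R(iε) φ)) = A R(iε) φ = iε R(iε) φ - φ`, so everything comes down to `iε R(iε) → 0`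
strongly as `ε → 0`. For symmetric `A`, `‖(-A + ir) ψ‖² = ‖Aψ‖² + ‖irψ‖²`, which bounds
`‖iε R(iε)‖ ≤ 1`; on `ran A` one has `iε R(iε) Aψ = iε (iε R(iε) ψ - ψ) → 0`; and `ran A` is dense
because `A` is self-adjoint and injective. A uniformly bounded family converging on a dense set
converges everywhere.
-/

open Complex Filter Topology
open scoped InnerProductSpace ComplexConjugate

noncomputable section

namespace SingPert

/-- `R` is the (everywhere defined, bounded) resolvent `(-A + z)⁻¹` of `A` at `z`. -/
structure IsResolvent {H : Type*} [NormedAddCommGroup H] [InnerProductSpace ℂ H]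
    (A : H →ₗ.[ℂ] H) (z : ℂ) (R : H →L[ℂ] H) : Prop where
  mem : ∀ ψ : H, R ψ ∈ A.domain
  left : ∀ ψ : H, -A ⟨R ψ, mem ψ⟩ + z • R ψ = ψ
  right : ∀ φ : A.domain, R (-A φ + z • (φ : H)) = (φ : H)

section General

variable {𝕜 E F ι : Type*} [NontriviallyNormedField 𝕜]
  [NormedAddCommGroup E] [NormedSpace 𝕜 E] [NormedAddCommGroup F] [NormedSpace 𝕜 F]

theorem tendsto_zero_of_dense_of_norm_le {l : Filter ι} (T : ι → E →L[𝕜] F)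
    (hT : ∃ C, ∀ i x, ‖T i x‖ ≤ C * ‖x‖) {s : Set E} (hs : Dense s)
    (h : ∀ y ∈ s, Tendsto (T · y) l (𝓝 0)) (x : E) : Tendsto (T · x) l (𝓝 0) := by
  have hequi : Equicontinuous ((↑) ∘ T : ι → E → F) :=
    ((NormedSpace.equicontinuous_TFAE T).out 3 1).mp hT
  exact (hequi.isClosed_setOfPred_tendsto continuous_const).closure_subset_iff.mpr h (hs x)

end General

section Resolvent

variable {H : Type*} [NormedAddCommGroup H] [InnerProductSpace ℂ H]

theorem IsResolvent.apply_resolvent {A : H →ₗ.[ℂ] H} {z : ℂ} {R : H →L[ℂ] H}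
    (hR : IsResolvent A z R) (φ : H) : A ⟨R φ, hR.mem φ⟩ = z • R φ - φ :=
  eq_sub_iff_add_eq.mpr (neg_add_eq_iff_eq_add.mp (hR.left φ)).symm

theorem IsResolvent.resolvent_apply {A : H →ₗ.[ℂ] H} {z : ℂ} {R : H →L[ℂ] H}
    (hR : IsResolvent A z R) (ψ : A.domain) : R (A ψ) = z • R ψ - ψ := by
  have h := hR.right ψ
  rw [map_add, map_neg, map_smul] at h
  exact eq_sub_iff_add_eq.mpr (neg_add_eq_iff_eq_add.mp h).symm

theorem norm_neg_add_I_mul_smul_sq {A : H →ₗ.[ℂ] H} (hA : A.IsFormalAdjoint A) (r : ℝ)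
    (ψ : A.domain) :
    ‖-A ψ + (I * r) • (ψ : H)‖ ^ 2 = ‖A ψ‖ ^ 2 + ‖(I * r) • (ψ : H)‖ ^ 2 := by
  have hreal : conj ⟪A ψ, (ψ : H)⟫_ℂ = ⟪A ψ, (ψ : H)⟫_ℂ := by
    rw [inner_conj_symm, hA ψ ψ]
  have hcross : re ⟪-A ψ, (I * r) • (ψ : H)⟫_ℂ = 0 := by
    rw [inner_smul_right, inner_neg_left]
    simp [Complex.conj_eq_iff_im.mp hreal]
  rw [norm_add_sq (𝕜 := ℂ), RCLike.re_to_complex, hcross, norm_neg]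
  ring

theorem IsResolvent.norm_I_mul_smul_apply_le {A : H →ₗ.[ℂ] H} (hA : A.IsFormalAdjoint A)
    {r : ℝ} {R : H →L[ℂ] H} (hR : IsResolvent A (I * r) R) (φ : H) :
    ‖(I * r) • R φ‖ ≤ ‖φ‖ := by
  have h := norm_neg_add_I_mul_smul_sq hA r ⟨R φ, hR.mem φ⟩
  rw [hR.left φ] at h
  refine (sq_le_sq₀ (norm_nonneg _) (norm_nonneg _)).mp ?_
  rw [h]
  exact le_add_of_nonneg_left (sq_nonneg _)

variable [CompleteSpace H]

theorem _root_.IsSelfAdjoint.isFormalAdjoint {A : H →ₗ.[ℂ] H} (hA : IsSelfAdjoint A) :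
    A.IsFormalAdjoint A := by
  have h := LinearPMap.adjoint_isFormalAdjoint hA.dense_domain
  rwa [LinearPMap.isSelfAdjoint_def.mp hA] at h

/-- `(ran A)ᗮ = ker A.adjoint = ker A`. -/
theorem _root_.IsSelfAdjoint.dense_range {A : H →ₗ.[ℂ] H} (hA : IsSelfAdjoint A)
    (hinj : ∀ φ : A.domain, A φ = 0 → (φ : H) = 0) : Dense (Set.range A) := by
  change Dense ((LinearMap.range A.toFun : Submodule ℂ H) : Set H)
  rw [Submodule.dense_iff_topologicalClosure_eq_top, Submodule.topologicalClosure_eq_top_iff,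
    Submodule.eq_bot_iff]
  intro φ hφ
  have horth : ∀ x : A.domain, ⟪φ, A x⟫_ℂ = 0 := fun x =>
    inner_eq_zero_symm.mp ((Submodule.mem_orthogonal _ _).mp hφ (A x) ⟨x, rfl⟩)
  have hker : ∃ h : φ ∈ A.adjoint.domain, A.adjoint ⟨φ, h⟩ = 0 := by
    have hmem : φ ∈ A.adjoint.domain :=
      LinearPMap.mem_adjoint_domain_of_exists φ ⟨0, fun x => by rw [inner_zero_left, horth]⟩
    exact ⟨hmem, LinearPMap.adjoint_apply_eq hA.dense_domain ⟨φ, hmem⟩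
      fun x => by rw [inner_zero_left, ← horth x]⟩
  rw [LinearPMap.isSelfAdjoint_def.mp hA] at hker
  obtain ⟨hmem, hAφ⟩ := hker
  exact hinj ⟨φ, hmem⟩ hAφ

theorem tendsto_I_mul_smul_resolvent {ι : Type*} {l : Filter ι} {A : H →ₗ.[ℂ] H}
    (hA : IsSelfAdjoint A) (hinj : ∀ φ : A.domain, A φ = 0 → (φ : H) = 0)
    {ε : ι → ℝ} (hε : Tendsto ε l (𝓝 0)) {R : ι → H →L[ℂ] H}
    (hR : ∀ i, IsResolvent A (I * ε i) (R i)) (φ : H) :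
    Tendsto (fun i => (I * ε i) • R i φ) l (𝓝 0) := by
  have hsym := hA.isFormalAdjoint
  have hIε : Tendsto (fun i => I * (ε i : ℂ)) l (𝓝 0) := by
    simpa using (Complex.continuous_ofReal.tendsto 0).comp hε |>.const_mul I
  refine tendsto_zero_of_dense_of_norm_le (fun i => (I * ε i) • R i)
    ⟨1, fun i x => by simpa using (hR i).norm_I_mul_smul_apply_le hsym x⟩
    (hA.dense_range hinj) ?_ φ
  rintro _ ⟨ψ, rfl⟩
  simp only [smul_apply, (hR _).resolvent_apply]
  refine hIε.zero_smul_isBoundedUnder_le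
    ⟨2 * ‖(ψ : H)‖, eventually_map.mpr (.of_forall fun i => ?_)⟩
  calc ‖(I * ε i) • R i ψ - ψ‖ ≤ ‖(I * ε i) • R i ψ‖ + ‖(ψ : H)‖ := norm_sub_le _ _
    _ ≤ 2 * ‖(ψ : H)‖ := by linarith [(hR i).norm_I_mul_smul_apply_le hsym ψ]

theorem Ahat_Rhat_apply {ι : Type*} {l : Filter ι} [l.NeBot] {A : H →ₗ.[ℂ] H}
    (hA : IsSelfAdjoint A) (hinj : ∀ φ : A.domain, A φ = 0 → (φ : H) = 0)
    {Dhat : Type*} [NormedAddCommGroup Dhat] [NormedSpace ℂ Dhat] {iota : A.domain →ₗ[ℂ] Dhat}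
    {Ahat : Dhat →L[ℂ] H} (hAhat : ∀ φ : A.domain, Ahat (iota φ) = A φ)
    {ε : ι → ℝ} (hε : Tendsto ε l (𝓝 0))
    {Rn : ι → H →L[ℂ] H} (hRn : ∀ n, IsResolvent A (I * (ε n : ℂ)) (Rn n))
    {Rhat : H →L[ℂ] Dhat}
    (hRhat : ∀ φ : H, Tendsto (fun n => iota ⟨Rn n φ, (hRn n).mem φ⟩) l (𝓝 (Rhat φ)))
    (φ : H) : Ahat (Rhat φ) = -φ := by
  refine tendsto_nhds_unique ((Ahat.continuous.tendsto _).comp (hRhat φ)) ?_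
  simpa [Function.comp_def, hAhat, (hRn _).apply_resolvent] using
    (tendsto_I_mul_smul_resolvent hA hinj hε hRn φ).sub_const φ

end Resolvent

theorem Ahat_comp_K_general
    {H : Type*} [NormedAddCommGroup H] [InnerProductSpace ℂ H] [CompleteSpace H]
    {X : Type*} [NormedAddCommGroup X] [NormedSpace ℂ X]
    (A : H →ₗ.[ℂ] H) (hA : IsSelfAdjoint A)
    (hinj : ∀ φ : A.domain, A φ = 0 → (φ : H) = 0)
    -- the completion `D̂(A)` of `D(A)` w.r.t. the norm `‖φ‖_(A) = ‖Aφ‖`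
    {Dhat : Type*} [NormedAddCommGroup Dhat] [NormedSpace ℂ Dhat]
    (iota : A.domain →ₗ[ℂ] Dhat)
    -- `Â`, the continuous extension of `A` to `D̂(A)`
    (Ahat : Dhat →L[ℂ] H) (hAhat : ∀ φ : A.domain, Ahat (iota φ) = A φ)
    -- a sequence of nonzero reals converging to `0`, with the associated resolvents
    (ε : ℕ → ℝ) (hεlim : Filter.Tendsto ε Filter.atTop (nhds 0))
    (Rn : ℕ → H →L[ℂ] H) (hRn : ∀ n, IsResolvent A (Complex.I * (ε n : ℂ)) (Rn n))
    -- `Rhat φ = lim 𝓘 (R(iεₙ) φ)`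
    (Rhat : H →L[ℂ] Dhat)
    (hRhat : ∀ φ : H, Filter.Tendsto (fun n => iota ⟨Rn n φ, (hRn n).mem φ⟩)
      Filter.atTop (nhds (Rhat φ)))
    -- a point `z ∈ ρ(A)` and the map `G(z)`
    (z : ℂ)
    (Gz : StrongDual ℂ X →SL[starRingEnd ℂ] H) :
    ∀ ℓ : StrongDual ℂ X, Ahat (z • Rhat (Gz ℓ)) = -(z • Gz ℓ) := by
  intro ℓ
  rw [map_smul, Ahat_Rhat_apply hA hinj hAhat hεlim hRn hRhat, smul_neg]

/-- Let `Â : D̂(A) → H` be the unique continuous extension of `A` through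
the canonical embedding `𝓘` (so `Â ∘ 𝓘 = A`).  Then for every `z ∈ ρ(A)` one has
`-Â ∘ K(z) = z G(z)`, i.e. `Â (K(z)ℓ) = -z • G(z)ℓ` for all `ℓ ∈ X'`,
where `K(z)ℓ = z • Rhat (G(z)ℓ)`. -/
theorem Ahat_comp_K
    {H : Type*} [NormedAddCommGroup H] [InnerProductSpace ℂ H] [CompleteSpace H]
    {X : Type*} [NormedAddCommGroup X] [NormedSpace ℂ X] [CompleteSpace X]
    (A : H →ₗ.[ℂ] H) (hA : IsSelfAdjoint A)
    (hinj : ∀ φ : A.domain, A φ = 0 → (φ : H) = 0)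
    (τ : A.domain →ₗ[ℂ] X)
    (hτbdd : ∃ c : ℝ, ∀ φ : A.domain,
      ‖τ φ‖ ≤ c * Real.sqrt (‖(φ : H)‖ ^ 2 + ‖A φ‖ ^ 2))
    -- the completion `D̂(A)` of `D(A)` w.r.t. the norm `‖φ‖_(A) = ‖Aφ‖`
    {Dhat : Type*} [NormedAddCommGroup Dhat] [NormedSpace ℂ Dhat] [CompleteSpace Dhat]
    (iota : A.domain →ₗ[ℂ] Dhat)
    (hiso : ∀ φ : A.domain, ‖iota φ‖ = ‖A φ‖)
    (hdense : DenseRange iota)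
    -- `Â`, the continuous extension of `A` to `D̂(A)`
    (Ahat : Dhat →L[ℂ] H) (hAhat : ∀ φ : A.domain, Ahat (iota φ) = A φ)
    -- a sequence of nonzero reals converging to `0`, with the associated resolvents
    (ε : ℕ → ℝ) (hε0 : ∀ n, ε n ≠ 0) (hεlim : Filter.Tendsto ε Filter.atTop (nhds 0))
    (Rn : ℕ → H →L[ℂ] H) (hRn : ∀ n, IsResolvent A (Complex.I * (ε n : ℂ)) (Rn n))
    -- `Rhat φ = lim 𝓘 (R(iεₙ) φ)`
    (Rhat : H →L[ℂ] Dhat)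
    (hRhat : ∀ φ : H, Filter.Tendsto (fun n => iota ⟨Rn n φ, (hRn n).mem φ⟩)
      Filter.atTop (nhds (Rhat φ)))
    -- a point `z ∈ ρ(A)` and the map `G(z)`
    (z : ℂ) (Rz Rzbar : H →L[ℂ] H)
    (hRz : IsResolvent A z Rz) (hRzbar : IsResolvent A (starRingEnd ℂ z) Rzbar)
    (Gz : StrongDual ℂ X →SL[starRingEnd ℂ] H)
    (hGz : ∀ (ℓ : StrongDual ℂ X) (ψ : H),
      ⟪Gz ℓ, ψ⟫_ℂ = ℓ (τ ⟨Rzbar ψ, hRzbar.mem ψ⟩)) :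
    ∀ ℓ : StrongDual ℂ X, Ahat (z • Rhat (Gz ℓ)) = -(z • Gz ℓ) :=
  Ahat_comp_K_general A hA hinj iota Ahat hAhat ε hεlim Rn hRn Rhat hRhat z Gz

end SingPert
end
end

section
/- Assume (h3): ‖τφ‖_X ≤ c‖Aφ‖_H for all φ ∈ D(A), and let τ̂ : D̂(A) → X be the continuous extension of τ. Then for each z ∈ ρ(A) the map Γ(z) := τ̂∘K(z) : X' → X is a bounded conjugate-linear operator satisfying, for all w, z ∈ ρ(A): (i) Γ(z) − Γ(w) = (z − w)·Ğ(w)∘G(z), where Ğ(w) := τ∘R(w); and (ii) ℓ₁(Γ(z*)ℓ₂) = (ℓ₂(Γ(z)ℓ₁))* for all ℓ₁, ℓ₂ ∈ X' (equivalently J_X∘Γ(z*) = Γ(z)', with J_X : X → X'' the canonical injection). -/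
/-!
Write `v_ℓ ∈ H` for the Riesz vector of `ψ ↦ ℓ (τ̂ (R̂ ψ))`. Passing to the limit in the resolvent
identity gives `R̂ (φ - q R(q) φ) = 𝓘 (R(q) φ)`, and since `R(q)* = R(q̄)` this identifies
`G(z) ℓ = v_ℓ - z R(z) v_ℓ`. Hence `Γ(z) ℓ = z τ (R(z) v_ℓ)`: identity (i) is then the resolvent
identity once more, and (ii) reduces to `⟪v₁ - z R(z) v₁, v₂⟫ = ⟪v₁, v₂ - z̄ R(z̄) v₂⟫`.
-/

open Complex Filter Topology
open scoped InnerProductSpace ComplexConjugate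

noncomputable section

namespace SingPert

theorem _root_.IsSelfAdjoint.isFormalAdjoint_s7 {𝕜 E : Type*} [RCLike 𝕜] [NormedAddCommGroup E]
    [InnerProductSpace 𝕜 E] [CompleteSpace E] {A : E →ₗ.[𝕜] E} (hA : IsSelfAdjoint A) :
    A.IsFormalAdjoint A := by
  have h := LinearPMap.adjoint_isFormalAdjoint hA.dense_domain
  rwa [LinearPMap.isSelfAdjoint_def.mp hA] at h

namespace IsResolvent

variable {H : Type*} [NormedAddCommGroup H] [InnerProductSpace ℂ H] {A : H →ₗ.[ℂ] H}
  {p q : ℂ} {R S : H →L[ℂ] H}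

def toDomain (hR : IsResolvent A p R) : H →ₗ[ℂ] A.domain :=
  LinearMap.codRestrict A.domain (R : H →ₗ[ℂ] H) hR.mem

theorem toDomain_apply (hR : IsResolvent A p R) (ψ : H) :
    hR.toDomain ψ = ⟨R ψ, hR.mem ψ⟩ :=
  rfl

theorem A_apply (hR : IsResolvent A p R) (ψ : H) : A (hR.toDomain ψ) = p • R ψ - ψ := by
  rw [toDomain_apply]
  linear_combination (norm := module) -hR.left ψ

theorem toDomain_sub_toDomain (hR : IsResolvent A p R) (hS : IsResolvent A q S) (φ : H) :
    hR.toDomain φ - hS.toDomain φ = (q - p) • hR.toDomain (S φ) := by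
  have hRS : R (-A (hS.toDomain φ) + p • S φ) = S φ := hR.right (hS.toDomain φ)
  have hRφ : R (-A (hS.toDomain φ) + q • S φ) = R φ := congrArg R (hS.left φ)
  rw [map_add, map_smul] at hRS hRφ
  ext
  simp only [Submodule.coe_sub, Submodule.coe_smul, toDomain_apply]
  linear_combination (norm := module) hRS - hRφ

theorem smul_toDomain_sub_smul_toDomain (hR : IsResolvent A p R) (hS : IsResolvent A q S)
    (φ : H) :
    q • hS.toDomain φ - p • hR.toDomain φ = (q - p) • hR.toDomain (φ - q • S φ) := by
  rw [map_sub, map_smul]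
  linear_combination (norm := module) (-q) • hR.toDomain_sub_toDomain hS φ

theorem inner_apply_left [CompleteSpace H] {R' : H →L[ℂ] H} (hA : IsSelfAdjoint A)
    (hR : IsResolvent A p R) (hR' : IsResolvent A (conj p) R') (a b : H) : ⟪R a, b⟫_ℂ = ⟪a, R' b⟫_ℂ := by
  have hsym : ⟪A (hR.toDomain a), R' b⟫_ℂ = ⟪R a, A (hR'.toDomain b)⟫_ℂ :=
    hA.isFormalAdjoint_s7 (hR.toDomain a) (hR'.toDomain b)
  conv_lhs => rw [← hR'.left b]
  rw [inner_add_right, inner_neg_right, inner_smul_right, ← hR'.toDomain_apply, ← hsym,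
    hR.A_apply, inner_sub_left, inner_smul_left]
  ring

variable {Dhat : Type*} [NormedAddCommGroup Dhat] [NormedSpace ℂ Dhat]
  {ι : Type*} {l : Filter ι} [l.NeBot] {pₙ : ι → ℂ} {Rₙ : ι → H →L[ℂ] H}
  {iota : A.domain →ₗ[ℂ] Dhat} {Rhat : H →L[ℂ] Dhat}

/-- As `1 - q R(q) = -A R(q)`, this says that `R̂ = lim 𝓘 ∘ R(pₙ)` acts as `-A⁻¹`. -/
theorem limit_apply_sub_smul (hS : IsResolvent A q S) (hpₙ : Tendsto pₙ l (𝓝 0))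
    (hRₙ : ∀ i, IsResolvent A (pₙ i) (Rₙ i))
    (hRhat : ∀ φ, Tendsto (fun i => iota ⟨Rₙ i φ, (hRₙ i).mem φ⟩) l (𝓝 (Rhat φ))) (φ : H) :
    Rhat (φ - q • S φ) = iota (hS.toDomain φ) := by
  have hdom : ∀ i, (hRₙ i).toDomain (φ - q • S φ)
      = hS.toDomain φ - pₙ i • (hRₙ i).toDomain (S φ) := fun i => by
    rw [map_sub, map_smul]
    linear_combination (norm := module) (hRₙ i).toDomain_sub_toDomain hS φ
  have hlim : Tendsto (fun i => iota (hS.toDomain φ) - pₙ i • iota ((hRₙ i).toDomain (S φ))) l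
      (𝓝 (iota (hS.toDomain φ))) := by
    simpa [toDomain_apply] using tendsto_const_nhds.sub (hpₙ.smul (hRhat (S φ)))
  refine tendsto_nhds_unique (hRhat _) (hlim.congr fun i => ?_)
  rw [← map_smul, ← map_sub, ← hdom, toDomain_apply]

theorem eq_sub_smul_apply [CompleteSpace H] {X : Type*} [NormedAddCommGroup X] [NormedSpace ℂ X]
    (hA : IsSelfAdjoint A) (hR : IsResolvent A q R) (hS : IsResolvent A (conj q) S)
    (hpₙ : Tendsto pₙ l (𝓝 0)) (hRₙ : ∀ i, IsResolvent A (pₙ i) (Rₙ i))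
    (hRhat : ∀ φ, Tendsto (fun i => iota ⟨Rₙ i φ, (hRₙ i).mem φ⟩) l (𝓝 (Rhat φ)))
    {τ : A.domain →ₗ[ℂ] X} {tauhat : Dhat →L[ℂ] X} (htauhat : ∀ φ, tauhat (iota φ) = τ φ)
    {ℓ : StrongDual ℂ X} {g v : H} (hg : ∀ ψ, ⟪g, ψ⟫_ℂ = ℓ (τ ⟨S ψ, hS.mem ψ⟩))
    (hv : ∀ ψ, ⟪v, ψ⟫_ℂ = ℓ (tauhat (Rhat ψ))) :
    g = v - q • R v := by
  refine ext_inner_right ℂ fun ψ => ?_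
  rw [hg, ← hS.toDomain_apply, ← htauhat, ← hS.limit_apply_sub_smul hpₙ hRₙ hRhat, ← hv,
    inner_sub_right, inner_smul_right, inner_sub_left, inner_smul_left,
    hR.inner_apply_left hA hS]

end IsResolvent

theorem Gamma_bounded_diff_and_symmetry_general
    {H : Type*} [NormedAddCommGroup H] [InnerProductSpace ℂ H] [CompleteSpace H]
    {X : Type*} [NormedAddCommGroup X] [NormedSpace ℂ X]
    (A : H →ₗ.[ℂ] H) (hA : IsSelfAdjoint A)
    (τ : A.domain →ₗ[ℂ] X)
    -- the completion `D̂(A)` of `D(A)` w.r.t. the norm `‖φ‖_(A) = ‖Aφ‖`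
    {Dhat : Type*} [NormedAddCommGroup Dhat] [NormedSpace ℂ Dhat]
    (iota : A.domain →ₗ[ℂ] Dhat)
    -- `τ̂`, the continuous extension of `τ` to `D̂(A)`
    (tauhat : Dhat →L[ℂ] X) (htauhat : ∀ φ : A.domain, tauhat (iota φ) = τ φ)
    -- a sequence of nonzero reals converging to `0`, with the associated resolvents
    (ε : ℕ → ℝ) (hεlim : Filter.Tendsto ε Filter.atTop (nhds 0))
    (Rn : ℕ → H →L[ℂ] H) (hRn : ∀ n, IsResolvent A (Complex.I * (ε n : ℂ)) (Rn n))
    -- `Rhat φ = lim 𝓘 (R(iεₙ) φ)`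
    (Rhat : H →L[ℂ] Dhat)
    (hRhat : ∀ φ : H, Filter.Tendsto (fun n => iota ⟨Rn n φ, (hRn n).mem φ⟩)
      Filter.atTop (nhds (Rhat φ)))
    -- points `z, w ∈ ρ(A)` and the maps `G(z)`, `G(z̄)`, `G(w)`
    (z w : ℂ) (Rz Rzbar Rw Rwbar : H →L[ℂ] H)
    (hRz : IsResolvent A z Rz) (hRzbar : IsResolvent A (starRingEnd ℂ z) Rzbar)
    (hRw : IsResolvent A w Rw) (hRwbar : IsResolvent A (starRingEnd ℂ w) Rwbar)
    (Gz Gzbar Gw : StrongDual ℂ X →SL[starRingEnd ℂ] H)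
    (hGz : ∀ (ℓ : StrongDual ℂ X) (ψ : H),
      ⟪Gz ℓ, ψ⟫_ℂ = ℓ (τ ⟨Rzbar ψ, hRzbar.mem ψ⟩))
    (hGzbar : ∀ (ℓ : StrongDual ℂ X) (ψ : H),
      ⟪Gzbar ℓ, ψ⟫_ℂ = ℓ (τ ⟨Rz ψ, hRz.mem ψ⟩))
    (hGw : ∀ (ℓ : StrongDual ℂ X) (ψ : H),
      ⟪Gw ℓ, ψ⟫_ℂ = ℓ (τ ⟨Rwbar ψ, hRwbar.mem ψ⟩)) :
    -- `Γ(z)` is bounded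
    (∃ C : ℝ, ∀ ℓ : StrongDual ℂ X, ‖tauhat (z • Rhat (Gz ℓ))‖ ≤ C * ‖ℓ‖) ∧
    -- (i) `Γ(z) − Γ(w) = (z − w) Ğ(w) ∘ G(z)`
    (∀ ℓ : StrongDual ℂ X,
      tauhat (z • Rhat (Gz ℓ)) - tauhat (w • Rhat (Gw ℓ))
        = (z - w) • τ ⟨Rw (Gz ℓ), hRw.mem (Gz ℓ)⟩) ∧
    -- (ii) `ℓ₁(Γ(z̄)ℓ₂) = (ℓ₂(Γ(z)ℓ₁))*`
    (∀ ℓ₁ ℓ₂ : StrongDual ℂ X,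
      ℓ₁ (tauhat ((starRingEnd ℂ z) • Rhat (Gzbar ℓ₂)))
        = starRingEnd ℂ (ℓ₂ (tauhat (z • Rhat (Gz ℓ₁))))) := by
  set v : StrongDual ℂ X → H :=
    fun ℓ => (InnerProductSpace.toDual ℂ H).symm ((ℓ.comp tauhat).comp Rhat)
  have hv (ℓ : StrongDual ℂ X) (ψ : H) : ⟪v ℓ, ψ⟫_ℂ = ℓ (tauhat (Rhat ψ)) :=
    InnerProductSpace.toDual_symm_apply
  have hpₙ : Tendsto (fun n => I * (ε n : ℂ)) atTop (𝓝 0) := by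
    simpa using ((continuous_ofReal.tendsto 0).comp hεlim).const_mul I
  have hRz' : IsResolvent A (conj (conj z)) Rz := by rwa [conj_conj]
  have hGz_eq (ℓ) : Gz ℓ = v ℓ - z • Rz (v ℓ) :=
    hRz.eq_sub_smul_apply hA hRzbar hpₙ hRn hRhat htauhat (hGz ℓ) (hv ℓ)
  have hGzbar_eq (ℓ) : Gzbar ℓ = v ℓ - conj z • Rzbar (v ℓ) :=
    hRzbar.eq_sub_smul_apply hA hRz' hpₙ hRn hRhat htauhat (hGzbar ℓ) (hv ℓ)
  have hGw_eq (ℓ) : Gw ℓ = v ℓ - w • Rw (v ℓ) :=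
    hRw.eq_sub_smul_apply hA hRwbar hpₙ hRn hRhat htauhat (hGw ℓ) (hv ℓ)
  have hΓ {q : ℂ} {R : H →L[ℂ] H} (hR : IsResolvent A q R) (x : H) :
      tauhat (q • Rhat (x - q • R x)) = q • τ (hR.toDomain x) := by
    rw [map_smul, hR.limit_apply_sub_smul hpₙ hRn hRhat, htauhat]
  refine ⟨⟨‖(z • tauhat.comp Rhat).comp Gz‖, fun ℓ => ?_⟩, fun ℓ => ?_, fun ℓ₁ ℓ₂ => ?_⟩
  · simpa using ((z • tauhat.comp Rhat).comp Gz).le_opNorm ℓ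
  · rw [hGw_eq, hΓ hRw, hGz_eq, hΓ hRz, ← hRw.toDomain_apply, ← map_smul τ (z - w),
      ← hRw.smul_toDomain_sub_smul_toDomain hRz, map_sub, map_smul, map_smul]
  · rw [hGzbar_eq, hΓ hRzbar, hGz_eq, hΓ hRz, map_smul, map_smul, smul_eq_mul, smul_eq_mul,
      map_mul, hRzbar.toDomain_apply, hRz.toDomain_apply, ← hGz, ← hGzbar,
      inner_conj_symm, hGz_eq, hGzbar_eq, inner_sub_left, inner_sub_right, inner_smul_left,
      inner_smul_right, hRz.inner_apply_left hA hRzbar]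

/-- Assume (h3) `‖τφ‖ ≤ c ‖Aφ‖` and let `τ̂ : D̂(A) → X` be the continuous
extension of `τ`.  Then `Γ(z) := τ̂ ∘ K(z) : X' → X` is a bounded conjugate-linear operator
satisfying `Γ(z) − Γ(w) = (z − w) Ğ(w) ∘ G(z)` (where `Ğ(w) = τ ∘ R(w)`) and
`ℓ₁(Γ(z̄)ℓ₂) = (ℓ₂(Γ(z)ℓ₁))*`.  Here `K(z)ℓ = z • Rhat (G(z)ℓ)`. -/
theorem Gamma_bounded_diff_and_symmetry
    {H : Type*} [NormedAddCommGroup H] [InnerProductSpace ℂ H] [CompleteSpace H]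
    {X : Type*} [NormedAddCommGroup X] [NormedSpace ℂ X] [CompleteSpace X]
    (A : H →ₗ.[ℂ] H) (hA : IsSelfAdjoint A)
    (hinj : ∀ φ : A.domain, A φ = 0 → (φ : H) = 0)
    (τ : A.domain →ₗ[ℂ] X)
    -- (h3)
    (hτbdd : ∃ c : ℝ, ∀ φ : A.domain, ‖τ φ‖ ≤ c * ‖A φ‖)
    -- the completion `D̂(A)` of `D(A)` w.r.t. the norm `‖φ‖_(A) = ‖Aφ‖`
    {Dhat : Type*} [NormedAddCommGroup Dhat] [NormedSpace ℂ Dhat] [CompleteSpace Dhat]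
    (iota : A.domain →ₗ[ℂ] Dhat)
    (hiso : ∀ φ : A.domain, ‖iota φ‖ = ‖A φ‖)
    (hdense : DenseRange iota)
    -- `τ̂`, the continuous extension of `τ` to `D̂(A)`
    (tauhat : Dhat →L[ℂ] X) (htauhat : ∀ φ : A.domain, tauhat (iota φ) = τ φ)
    -- a sequence of nonzero reals converging to `0`, with the associated resolvents
    (ε : ℕ → ℝ) (hε0 : ∀ n, ε n ≠ 0) (hεlim : Filter.Tendsto ε Filter.atTop (nhds 0))
    (Rn : ℕ → H →L[ℂ] H) (hRn : ∀ n, IsResolvent A (Complex.I * (ε n : ℂ)) (Rn n))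
    -- `Rhat φ = lim 𝓘 (R(iεₙ) φ)`
    (Rhat : H →L[ℂ] Dhat)
    (hRhat : ∀ φ : H, Filter.Tendsto (fun n => iota ⟨Rn n φ, (hRn n).mem φ⟩)
      Filter.atTop (nhds (Rhat φ)))
    -- points `z, w ∈ ρ(A)` and the maps `G(z)`, `G(z̄)`, `G(w)`
    (z w : ℂ) (Rz Rzbar Rw Rwbar : H →L[ℂ] H)
    (hRz : IsResolvent A z Rz) (hRzbar : IsResolvent A (starRingEnd ℂ z) Rzbar)
    (hRw : IsResolvent A w Rw) (hRwbar : IsResolvent A (starRingEnd ℂ w) Rwbar)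
    (Gz Gzbar Gw : StrongDual ℂ X →SL[starRingEnd ℂ] H)
    (hGz : ∀ (ℓ : StrongDual ℂ X) (ψ : H),
      ⟪Gz ℓ, ψ⟫_ℂ = ℓ (τ ⟨Rzbar ψ, hRzbar.mem ψ⟩))
    (hGzbar : ∀ (ℓ : StrongDual ℂ X) (ψ : H),
      ⟪Gzbar ℓ, ψ⟫_ℂ = ℓ (τ ⟨Rz ψ, hRz.mem ψ⟩))
    (hGw : ∀ (ℓ : StrongDual ℂ X) (ψ : H),
      ⟪Gw ℓ, ψ⟫_ℂ = ℓ (τ ⟨Rwbar ψ, hRwbar.mem ψ⟩)) :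
    -- `Γ(z)` is bounded
    (∃ C : ℝ, ∀ ℓ : StrongDual ℂ X, ‖tauhat (z • Rhat (Gz ℓ))‖ ≤ C * ‖ℓ‖) ∧
    -- (i) `Γ(z) − Γ(w) = (z − w) Ğ(w) ∘ G(z)`
    (∀ ℓ : StrongDual ℂ X,
      tauhat (z • Rhat (Gz ℓ)) - tauhat (w • Rhat (Gw ℓ))
        = (z - w) • τ ⟨Rw (Gz ℓ), hRw.mem (Gz ℓ)⟩) ∧
    -- (ii) `ℓ₁(Γ(z̄)ℓ₂) = (ℓ₂(Γ(z)ℓ₁))*`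
    (∀ ℓ₁ ℓ₂ : StrongDual ℂ X,
      ℓ₁ (tauhat ((starRingEnd ℂ z) • Rhat (Gzbar ℓ₂)))
        = starRingEnd ℂ (ℓ₂ (tauhat (z • Rhat (Gz ℓ₁))))) :=
  Gamma_bounded_diff_and_symmetry_general A hA τ iota tauhat htauhat ε hεlim Rn hRn Rhat hRhat z w
    Rz Rzbar Rw Rwbar hRz hRzbar hRw hRwbar Gz Gzbar Gw hGz hGzbar hGw

end SingPert
end
end
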